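/- Let 0 ≤ p_{d-1} ≤ p_d ≤ 1 with p_{d-1} < p_d and p_{d-1} + p_d ≤ 1, and let n ≥ 1. Suppose random variables λ_1, λ_2 satisfy: (a) there is a Binomial(n, p_d) random variable h_d with h_d ≤ λ_1 almost surely, and (b) E[(λ_2 - p_{d-1}·n)²] ≤ 126·(1 - p_d)·n. Then Pr[λ_1 - λ_2 < (1/2)(p_d - p_{d-1})·n] ≤ (2032/n)·(1 - p_d)/(p_d - p_{d-1})². -/
import Mathlib

open MeasureTheory ProbabilityTheory

private lemma shift_sum (N : ℕ) (p q : ℝ) (f : ℕ → ℝ) :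
    ∑ m ∈ Finset.range (N + 2), (m : ℝ) * ((N + 1).choose m : ℝ) * p ^ m * q ^ (N + 1 - m) * f m
      = (N + 1 : ℝ) * p *
        ∑ k ∈ Finset.range (N + 1), (N.choose k : ℝ) * p ^ k * q ^ (N - k) * f (k + 1) := by
  rw [Finset.sum_range_succ']
  simp only [Nat.cast_zero, zero_mul, add_zero]
  rw [Finset.mul_sum]
  refine Finset.sum_congr rfl fun k hk => ?_
  have hnat : (k + 1) * (N + 1).choose (k + 1) = (N + 1) * N.choose k := by
    rw [mul_comm]
    simpa [Nat.succ_eq_add_one] using (Nat.add_one_mul_choose_eq N k).symm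
  have h1 : ((k + 1 : ℕ) : ℝ) * ((N + 1).choose (k + 1) : ℝ) = (N + 1 : ℝ) * (N.choose k : ℝ) := by
    exact_mod_cast congrArg (Nat.cast : ℕ → ℝ) hnat
  have h2 : N + 1 - (k + 1) = N - k := by omega
  rw [h2, pow_succ]
  push_cast at h1 ⊢
  linear_combination (p ^ k * p * q ^ (N - k) * f (k + 1)) * h1

private lemma sum_S0 (n : ℕ) {p q : ℝ} (hpq : p + q = 1) :
    ∑ m ∈ Finset.range (n + 1), (n.choose m : ℝ) * p ^ m * q ^ (n - m) = 1 := by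
  have hcalc : ∑ m ∈ Finset.range (n + 1), (n.choose m : ℝ) * p ^ m * q ^ (n - m)
      = ∑ m ∈ Finset.range (n + 1), p ^ m * q ^ (n - m) * (n.choose m : ℝ) :=
    Finset.sum_congr rfl fun m _ => by ring
  rw [hcalc, ← add_pow, hpq, one_pow]

private lemma sum_S1 (n : ℕ) {p q : ℝ} (hpq : p + q = 1) :
    ∑ m ∈ Finset.range (n + 1), (m : ℝ) * (n.choose m : ℝ) * p ^ m * q ^ (n - m) = n * p := by
  cases n with
  | zero => simp
  | succ N =>
    have hs := shift_sum N p q (fun _ => 1)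
    simp only [mul_one] at hs
    rw [hs, sum_S0 N hpq]
    push_cast; ring

private lemma sum_S2 (n : ℕ) {p q : ℝ} (hpq : p + q = 1) :
    ∑ m ∈ Finset.range (n + 1), (m : ℝ) * ((m : ℝ) - 1) * (n.choose m : ℝ) * p ^ m * q ^ (n - m)
      = n * ((n : ℝ) - 1) * p ^ 2 := by
  cases n with
  | zero => simp
  | succ N =>
    have hs := shift_sum N p q (fun m => (m : ℝ) - 1)
    have hl : ∑ m ∈ Finset.range (N + 2),
        (m : ℝ) * ((m : ℝ) - 1) * ((N + 1).choose m : ℝ) * p ^ m * q ^ (N + 1 - m)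
        = ∑ m ∈ Finset.range (N + 2),
          (m : ℝ) * ((N + 1).choose m : ℝ) * p ^ m * q ^ (N + 1 - m) * ((m : ℝ) - 1) :=
      Finset.sum_congr rfl fun m _ => by ring
    have hr : ∑ k ∈ Finset.range (N + 1),
        (N.choose k : ℝ) * p ^ k * q ^ (N - k) * (((k + 1 : ℕ) : ℝ) - 1)
        = ∑ k ∈ Finset.range (N + 1), (k : ℝ) * (N.choose k : ℝ) * p ^ k * q ^ (N - k) :=
      Finset.sum_congr rfl fun k _ => by push_cast; ring
    rw [hl, hs, hr, sum_S1 N hpq]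
    push_cast; ring

private lemma varsum (n : ℕ) {p q : ℝ} (hpq : p + q = 1) :
    ∑ m ∈ Finset.range (n + 1),
        (n.choose m : ℝ) * p ^ m * q ^ (n - m) * ((m : ℝ) - p * n) ^ 2 = n * p * q := by
  have h0 := sum_S0 n hpq
  have h1 := sum_S1 n hpq
  have h2 := sum_S2 n hpq
  have hexp : ∑ m ∈ Finset.range (n + 1),
      (n.choose m : ℝ) * p ^ m * q ^ (n - m) * ((m : ℝ) - p * n) ^ 2
      = ∑ m ∈ Finset.range (n + 1),
        ((m : ℝ) * ((m : ℝ) - 1) * (n.choose m : ℝ) * p ^ m * q ^ (n - m)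
          + (1 - 2 * p * n) * ((m : ℝ) * (n.choose m : ℝ) * p ^ m * q ^ (n - m))
          + (p * n) ^ 2 * ((n.choose m : ℝ) * p ^ m * q ^ (n - m))) :=
    Finset.sum_congr rfl fun m _ => by ring
  rw [hexp]
  rw [Finset.sum_add_distrib, Finset.sum_add_distrib, ← Finset.mul_sum, ← Finset.mul_sum,
    h0, h1, h2]
  have hq : q = 1 - p := by linarith
  rw [hq]; ring

theorem stmt19 {Ω : Type*} [MeasureSpace Ω] [IsProbabilityMeasure (ℙ : Measure Ω)]
    (n : ℕ) (hn : 1 ≤ n) (pdm1 pd : ℝ)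
    (hp0 : 0 ≤ pdm1) (hgap : pdm1 < pd) (hpd : pd ≤ 1) (hpsum : pdm1 + pd ≤ 1)
    (lam1 lam2 : Ω → ℝ) (hlam1 : Measurable lam1) (hlam2 : Measurable lam2)
    -- (a) a `Binomial(n, pd)` random variable `h` with `h ≤ λ₁` almost surely
    (h : Ω → ℕ) (hhmeas : Measurable h)
    (hlaw : ∀ m : ℕ, ℙ {ω | h ω = m}
      = ENNReal.ofReal ((n.choose m : ℝ) * pd ^ m * (1 - pd) ^ (n - m)))
    (hle : ∀ᵐ ω ∂ℙ, (h ω : ℝ) ≤ lam1 ω)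
    -- (b) the second-moment bound on `λ₂ - p_{d-1}·n`
    (hint : Integrable (fun ω => (lam2 ω - pdm1 * n) ^ 2) ℙ)
    (hmom : (∫ ω, (lam2 ω - pdm1 * n) ^ 2 ∂ℙ) ≤ 126 * (1 - pd) * n) :
    (ℙ {ω | lam1 ω - lam2 ω < (1 / 2) * (pd - pdm1) * n}).toReal
      ≤ (2032 / n) * (1 - pd) / (pd - pdm1) ^ 2 := by
  set q : ℝ := 1 - pd with hqdef
  set Δ : ℝ := pd - pdm1 with hΔdef
  set t : ℝ := Δ * n / 4 with htdef
  have hΔ : 0 < Δ := by rw [hΔdef]; linarith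
  have hq0 : 0 ≤ q := by rw [hqdef]; linarith
  have hn' : (0 : ℝ) < n := by exact_mod_cast hn
  have ht : 0 < t := by positivity
  set r : ℕ → ℝ := fun m => (n.choose m : ℝ) * pd ^ m * q ^ (n - m) with hrdef
  have hr0 : ∀ m, 0 ≤ r m := by
    intro m
    have hpd0 : (0 : ℝ) ≤ pd := by linarith
    rw [hrdef]
    positivity
  set A : Set Ω := {ω | (h ω : ℝ) ≤ pd * n - t} with hAdef
  set B : Set Ω := {ω | t ^ 2 ≤ (lam2 ω - pdm1 * n) ^ 2} with hBdef
  set E : Set Ω := {ω | lam1 ω - lam2 ω < (1 / 2) * (pd - pdm1) * n} with hEdef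
  -- h > n has measure 0
  have hbig : ℙ {ω | n < h ω} = 0 := by
    have hsub : {ω | n < h ω} ⊆ ⋃ k : ℕ, {ω | h ω = n + 1 + k} := by
      intro ω hω
      have hω' : n < h ω := hω
      exact Set.mem_iUnion.2 ⟨h ω - (n + 1), by simp only [Set.mem_setOf_eq]; omega⟩
    refine measure_mono_null hsub (measure_iUnion_null fun k => ?_)
    rw [hlaw, Nat.choose_eq_zero_of_lt (by omega)]
    simp
  -- bound on the measure of A
  set S : Finset ℕ := (Finset.range (n + 1)).filter (fun m => (m : ℝ) ≤ pd * n - t) with hSdef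
  have hAsub : A ⊆ (⋃ m ∈ S, {ω | h ω = m}) ∪ {ω | n < h ω} := by
    intro ω hω
    by_cases hc : h ω ≤ n
    · left
      refine Set.mem_biUnion ?_ rfl
      exact Finset.mem_filter.2 ⟨Finset.mem_range.2 (by omega), hω⟩
    · right
      simp only [Set.mem_setOf_eq]
      omega
  have hA1 : ℙ A ≤ ∑ m ∈ S, ENNReal.ofReal (r m) := by
    calc ℙ A ≤ ℙ ((⋃ m ∈ S, {ω | h ω = m}) ∪ {ω | n < h ω}) := measure_mono hAsub
      _ ≤ ℙ (⋃ m ∈ S, {ω | h ω = m}) + ℙ {ω | n < h ω} := measure_union_le _ _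
      _ = ℙ (⋃ m ∈ S, {ω | h ω = m}) := by rw [hbig, add_zero]
      _ ≤ ∑ m ∈ S, ℙ {ω | h ω = m} := measure_biUnion_finset_le S (fun m => {ω | h ω = m})
      _ = ∑ m ∈ S, ENNReal.ofReal (r m) := Finset.sum_congr rfl fun m _ => hlaw m
  have hA2 : (ℙ A).toReal ≤ ∑ m ∈ S, r m := by
    have hfin : (∑ m ∈ S, ENNReal.ofReal (r m)) ≠ ⊤ :=
      (ENNReal.sum_lt_top.2 fun m _ => ENNReal.ofReal_lt_top).ne
    calc (ℙ A).toReal ≤ (∑ m ∈ S, ENNReal.ofReal (r m)).toReal := ENNReal.toReal_mono hfin hA1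
      _ = ∑ m ∈ S, (ENNReal.ofReal (r m)).toReal :=
        ENNReal.toReal_sum fun m _ => ENNReal.ofReal_lt_top.ne
      _ = ∑ m ∈ S, r m := Finset.sum_congr rfl fun m _ => ENNReal.toReal_ofReal (hr0 m)
  have hpq : pd + q = 1 := by rw [hqdef]; ring
  have hvar := varsum n hpq
  have hkey : t ^ 2 * ∑ m ∈ S, r m ≤ (n : ℝ) * pd * q := by
    calc t ^ 2 * ∑ m ∈ S, r m = ∑ m ∈ S, t ^ 2 * r m := Finset.mul_sum _ _ _
      _ ≤ ∑ m ∈ S, r m * ((m : ℝ) - pd * n) ^ 2 := by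
        refine Finset.sum_le_sum fun m hm => ?_
        have hm' : (m : ℝ) ≤ pd * n - t := (Finset.mem_filter.1 hm).2
        have h3 : t ≤ pd * (n : ℝ) - m := by linarith
        have hsq : t ^ 2 ≤ (pd * (n : ℝ) - m) ^ 2 := pow_le_pow_left₀ ht.le h3 2
        calc t ^ 2 * r m ≤ (pd * (n : ℝ) - m) ^ 2 * r m :=
              mul_le_mul_of_nonneg_right hsq (hr0 m)
          _ = r m * ((m : ℝ) - pd * n) ^ 2 := by ring
      _ ≤ ∑ m ∈ Finset.range (n + 1), r m * ((m : ℝ) - pd * n) ^ 2 := by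
        refine Finset.sum_le_sum_of_subset_of_nonneg (Finset.filter_subset _ _) fun m _ _ => ?_
        exact mul_nonneg (hr0 m) (sq_nonneg _)
      _ = (n : ℝ) * pd * q := hvar
  have h1 : t ^ 2 * (ℙ A).toReal ≤ (n : ℝ) * pd * q :=
    le_trans (mul_le_mul_of_nonneg_left hA2 (sq_nonneg t)) hkey
  -- bound on the measure of B via Markov
  have hB1 : t ^ 2 * (ℙ B).toReal ≤ 126 * q * n := by
    have hmar := mul_meas_ge_le_integral_of_nonneg (μ := ℙ)
      (f := fun ω => (lam2 ω - pdm1 * n) ^ 2)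
      (Filter.Eventually.of_forall fun ω => sq_nonneg _) hint (t ^ 2)
    exact hmar.trans hmom
  -- inclusion of the main event
  have hEsub : E ⊆ A ∪ B ∪ {ω | ¬ (h ω : ℝ) ≤ lam1 ω} := by
    intro ω hω
    by_cases hG : (h ω : ℝ) ≤ lam1 ω
    · have hE : lam1 ω - lam2 ω < (1 / 2) * (pd - pdm1) * n := hω
      by_cases hA' : ω ∈ A
      · exact Or.inl (Or.inl hA')
      · left; right
        simp only [hAdef, Set.mem_setOf_eq, not_le] at hA'
        simp only [hBdef, Set.mem_setOf_eq]
        have hts : t = (pd - pdm1) * (n : ℝ) / 4 := by rw [htdef, hΔdef]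
        have h2 : t ≤ lam2 ω - pdm1 * n := by
          by_contra hc
          push_neg at hc
          linarith
        nlinarith
    · exact Or.inr hG
  have hnull : ℙ {ω | ¬ (h ω : ℝ) ≤ lam1 ω} = 0 := by
    rw [ae_iff] at hle; exact hle
  have hE1 : ℙ E ≤ ℙ A + ℙ B := by
    calc ℙ E ≤ ℙ (A ∪ B ∪ {ω | ¬ (h ω : ℝ) ≤ lam1 ω}) := measure_mono hEsub
      _ ≤ ℙ (A ∪ B) + ℙ {ω | ¬ (h ω : ℝ) ≤ lam1 ω} := measure_union_le _ _
      _ = ℙ (A ∪ B) := by rw [hnull, add_zero]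
      _ ≤ ℙ A + ℙ B := measure_union_le _ _
  have hE2 : (ℙ E).toReal ≤ (ℙ A).toReal + (ℙ B).toReal := by
    calc (ℙ E).toReal ≤ (ℙ A + ℙ B).toReal :=
      ENNReal.toReal_mono (ENNReal.add_ne_top.2 ⟨measure_ne_top _ _, measure_ne_top _ _⟩) hE1
      _ = (ℙ A).toReal + (ℙ B).toReal :=
        ENNReal.toReal_add (measure_ne_top _ _) (measure_ne_top _ _)
  -- final arithmetic
  set a := (ℙ A).toReal with hadef
  set b := (ℙ B).toReal with hbdef
  have ha0 : 0 ≤ a := ENNReal.toReal_nonneg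
  have hb0 : 0 ≤ b := ENNReal.toReal_nonneg
  have hfin : ((a + b) * ((n : ℝ) * Δ ^ 2)) * (n : ℝ) ≤ (2032 * q) * (n : ℝ) := by
    have ht2 : t ^ 2 = Δ ^ 2 * (n : ℝ) ^ 2 / 16 := by rw [htdef]; ring
    have hnq : (0 : ℝ) ≤ (n : ℝ) * q := mul_nonneg hn'.le hq0
    have hpdq : (n : ℝ) * pd * q ≤ (n : ℝ) * q := by
      calc (n : ℝ) * pd * q = pd * ((n : ℝ) * q) := by ring
        _ ≤ 1 * ((n : ℝ) * q) := mul_le_mul_of_nonneg_right hpd hnq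
        _ = (n : ℝ) * q := one_mul _
    have e1 : Δ ^ 2 * (n : ℝ) ^ 2 / 16 * a ≤ (n : ℝ) * pd * q := by rw [← ht2]; exact h1
    have e2 : Δ ^ 2 * (n : ℝ) ^ 2 / 16 * b ≤ 126 * q * (n : ℝ) := by rw [← ht2]; exact hB1
    clear_value q Δ t a b
    linarith [e1, e2, hpdq]
  have hfin2 : (a + b) * ((n : ℝ) * Δ ^ 2) ≤ 2032 * q := le_of_mul_le_mul_right hfin hn'
  have hrhs : (2032 / (n : ℝ)) * (1 - pd) / (pd - pdm1) ^ 2 = 2032 * q / ((n : ℝ) * Δ ^ 2) := by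
    have hne : (n : ℝ) ≠ 0 := hn'.ne'
    have hΔne : pd - pdm1 ≠ 0 := by linarith
    rw [hqdef, hΔdef]
    field_simp
  calc (ℙ E).toReal ≤ a + b := hE2
    _ ≤ 2032 * q / ((n : ℝ) * Δ ^ 2) := by
        rw [le_div_iff₀ (by positivity)]; exact hfin2
    _ = (2032 / (n : ℝ)) * (1 - pd) / (pd - pdm1) ^ 2 := hrhs.symm
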